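/- arXiv:math/0405315 — 7 statements merged into one kernel-verified Lean document; each statement's English description precedes it below -/
import Mathlib

section
/- The (xA)-adic completion A* of A is equal to R* = k[y,z]_{(y,z)}[[x]], and the extended ideal PA* = (f,g)R* is not an integrally closed ideal of R*. -/
set_option synthInstance.maxHeartbeats 1000000
set_option maxHeartbeats 1000000


noncomputable section

open PowerSeries

variable (k : Type) [Field k]

abbrev P2 (k : Type) [Field k] := MvPolynomial (Fin 2) k

def mP : Ideal (P2 k) := RingHom.ker (MvPolynomial.aeval (R := k) (fun _ : Fin 2 => (0:k))).toRingHom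

instance : (mP k).IsPrime := RingHom.ker_isPrime _

abbrev Rloc (k : Type) [Field k] := Localization.AtPrime (mP k)

abbrev Rstar (k : Type) [Field k] := PowerSeries (Rloc k)

def kk : k →+* Rstar k :=
  (PowerSeries.C : Rloc k →+* Rstar k).comp ((algebraMap (P2 k) (Rloc k)).comp (algebraMap k (P2 k)))

def xx : Rstar k := PowerSeries.X
def yy : Rstar k := PowerSeries.C (algebraMap (P2 k) (Rloc k) (MvPolynomial.X 0))
def zz : Rstar k := PowerSeries.C (algebraMap (P2 k) (Rloc k) (MvPolynomial.X 1))

def emb : PowerSeries k →+* Rstar k :=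
  PowerSeries.map ((algebraMap (P2 k) (Rloc k)).comp (algebraMap k (P2 k)))

variable (α β : PowerSeries k)

def ff : Rstar k := (yy k - emb k α) ^ 2
def gg : Rstar k := (zz k - emb k β) ^ 2

abbrev K (k : Type) [Field k] := FractionRing (Rstar k)

def ι : Rstar k →+* K k := algebraMap _ _

/-- The subfield `k(x,y,z,f,g)` of the fraction field of `R*`. -/
def LL : Subfield (K k) :=
  Subfield.closure (Set.range ((ι k).comp (kk k)) ∪
    {ι k (xx k), ι k (yy k), ι k (zz k), ι k (ff k α), ι k (gg k β)})

/-- `A = k(x,y,z,f,g) ∩ R*`, as a subring of `R*`. -/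
def AA : Subring (Rstar k) := Subring.comap (ι k) (LL k α β).toSubring

lemma ff_mem : ff k α ∈ AA k α β := by
  refine Subfield.subset_closure ?_
  simp [Set.mem_union]

lemma gg_mem : gg k β ∈ AA k α β := by
  refine Subfield.subset_closure ?_
  simp [Set.mem_union]

lemma xx_mem : xx k ∈ AA k α β := by
  refine Subfield.subset_closure ?_
  simp [Set.mem_union]

def fA : AA k α β := ⟨ff k α, ff_mem k α β⟩
def gA : AA k α β := ⟨gg k β, gg_mem k α β⟩

def PP : Ideal (AA k α β) := Ideal.span {fA k α β, gA k α β}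

/-- `r` is integral over the ideal `I`: it satisfies a monic equation
`r^n + a₁ r^(n-1) + ⋯ + aₙ = 0` with `aᵢ ∈ Iⁱ`. -/
def IsIntegralOverIdeal {R : Type*} [CommRing R] (I : Ideal R) (r : R) : Prop :=
  ∃ n : ℕ, 0 < n ∧ ∃ a : ℕ → R, (∀ i ∈ Finset.Icc 1 n, a i ∈ I ^ i) ∧
    r ^ n + ∑ i ∈ Finset.Icc 1 n, a i * r ^ (n - i) = 0

/-- An ideal is integrally closed if every element integral over it belongs to it. -/
def IsIntegrallyClosedIdeal {R : Type*} [CommRing R] (I : Ideal R) : Prop :=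
  ∀ r : R, IsIntegralOverIdeal I r → r ∈ I

/-!
`A` contains `k[y,z]_{(y,z)}` and `x`, and since `A` is cut out of `R*` by a subfield containing
`x`, an element `r ∈ R*` lies in `A` as soon as `x r` does. Hence `A / xⁿA → R* / xⁿR*` is
injective, and it is surjective because truncations of power series are polynomials in `x` over
`k[y,z]_{(y,z)}`. As `R*` is `x`-adically complete, the `x`-adic completion of `A` is `R*`.

The element `(y - α)(z - β)` is integral over `(f, g)R*`, its square being `f g`. It does not lie
in `(f, g)R*`: setting `x = 0` would put `y z` into `(y², z²)k[y,z]_{(y,z)}`, i.e. `s y z` into the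
monomial ideal `(y², z²)` for some `s` with nonzero constant term.
-/

open Function

theorem Ideal.pow_le_comap_pow {S T : Type*} [CommRing S] [CommRing T] {φ : S →+* T}
    {J : Ideal S} {I : Ideal T} (hJI : J ≤ I.comap φ) (n : ℕ) : J ^ n ≤ (I ^ n).comap φ :=
  (Ideal.pow_right_mono hJI n).trans (Ideal.le_comap_pow φ n)

namespace AdicCompletion

variable {S T : Type*} [CommRing S] [CommRing T]

theorem factorPow_evalₐ (J : Ideal S) {m n : ℕ} (hmn : m ≤ n) (x : AdicCompletion J S) :
    Ideal.Quotient.factorPow J hmn (evalₐ J n x) = evalₐ J m x := by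
  obtain ⟨x, rfl⟩ := mk_surjective J S x
  simpa only [evalₐ_mk, Ideal.Quotient.factor_mk] using Ideal.mk_eq_mk J hmn x

variable {φ : S →+* T} {J : Ideal S} {I : Ideal T} (hJI : J ≤ I.comap φ)
  (hbij : ∀ n, Bijective (Ideal.quotientMap (I ^ n) φ (Ideal.pow_le_comap_pow hJI n)))

def quotientPowEquiv (n : ℕ) : S ⧸ J ^ n ≃+* T ⧸ I ^ n :=
  RingEquiv.ofBijective _ (hbij n)

theorem factorPow_quotientPowEquiv {m n : ℕ} (hmn : m ≤ n) (x : S ⧸ J ^ n) :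
    Ideal.Quotient.factorPow I hmn (quotientPowEquiv hJI hbij n x) =
      quotientPowEquiv hJI hbij m (Ideal.Quotient.factorPow J hmn x) := by
  obtain ⟨s, rfl⟩ := Ideal.Quotient.mk_surjective x
  rfl

theorem factorPow_comp_quotientPowEquiv_symm_comp_mk {m n : ℕ} (hmn : m ≤ n) :
    (Ideal.Quotient.factorPow J hmn).comp
        ((quotientPowEquiv hJI hbij n).symm.toRingHom.comp (Ideal.Quotient.mk (I ^ n))) =
      (quotientPowEquiv hJI hbij m).symm.toRingHom.comp (Ideal.Quotient.mk (I ^ m)) := by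
  ext t
  apply (quotientPowEquiv hJI hbij m).injective
  simp [← factorPow_quotientPowEquiv]

theorem factorPow_comp_quotientPowEquiv_comp_evalₐ {m n : ℕ} (hmn : m ≤ n) :
    (Ideal.Quotient.factorPow I hmn).comp
        ((quotientPowEquiv hJI hbij n).toRingHom.comp (evalₐ J n).toRingHom) =
      (quotientPowEquiv hJI hbij m).toRingHom.comp (evalₐ J m).toRingHom := by
  ext x
  simp [factorPow_quotientPowEquiv, factorPow_evalₐ]

def liftQuotientPowEquivSymm : T →+* AdicCompletion J S :=
  liftRingHom J _ (factorPow_comp_quotientPowEquiv_symm_comp_mk hJI hbij)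

def liftQuotientPowEquiv [IsAdicComplete I T] : AdicCompletion J S →+* T :=
  IsAdicComplete.liftRingHom I _ (factorPow_comp_quotientPowEquiv_comp_evalₐ hJI hbij)

theorem evalₐ_liftQuotientPowEquivSymm (n : ℕ) (t : T) :
    evalₐ J n (liftQuotientPowEquivSymm hJI hbij t) =
      (quotientPowEquiv hJI hbij n).symm (Ideal.Quotient.mk (I ^ n) t) :=
  evalₐ_liftRingHom _ _ _ n t

theorem liftQuotientPowEquivSymm_apply_map (s : S) :
    liftQuotientPowEquivSymm hJI hbij (φ s) = of J S s :=
  ext_evalₐ fun n ↦ by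
    rw [evalₐ_liftQuotientPowEquivSymm, evalₐ_of, RingEquiv.symm_apply_eq]
    rfl

variable [IsAdicComplete I T]

theorem mk_liftQuotientPowEquiv (n : ℕ) (x : AdicCompletion J S) :
    Ideal.Quotient.mk (I ^ n) (liftQuotientPowEquiv hJI hbij x) =
      quotientPowEquiv hJI hbij n (evalₐ J n x) :=
  IsAdicComplete.mk_liftRingHom _ _ _ n x

def ringEquivOfBijectiveQuotientMap : AdicCompletion J S ≃+* T :=
  RingEquiv.ofRingHom (liftQuotientPowEquiv hJI hbij) (liftQuotientPowEquivSymm hJI hbij)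
    (RingHom.coe_inj <| IsHausdorff.funext' I fun n t ↦ by
      simp [mk_liftQuotientPowEquiv, evalₐ_liftQuotientPowEquivSymm])
    (RingHom.ext fun x ↦ ext_evalₐ fun n ↦ by
      simp [mk_liftQuotientPowEquiv, evalₐ_liftQuotientPowEquivSymm])

theorem ringEquivOfBijectiveQuotientMap_of (s : S) :
    ringEquivOfBijectiveQuotientMap hJI hbij (of J S s) = φ s := by
  rw [← liftQuotientPowEquivSymm_apply_map hJI hbij s]
  exact (ringEquivOfBijectiveQuotientMap hJI hbij).apply_symm_apply (φ s)

end AdicCompletion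

namespace PowerSeries

variable {R : Type*} [CommRing R] {S : Subring R⟦X⟧}

theorem span_X_le_comap_span_X (hX : X ∈ S) :
    Ideal.span {⟨X, hX⟩} ≤ (Ideal.span {X}).comap S.subtype := by
  rw [Ideal.span_le, Set.singleton_subset_iff]
  exact Ideal.subset_span rfl

theorem coe_polynomial_mem (hC : ∀ c, C c ∈ S) (hX : X ∈ S) (p : Polynomial R) :
    (p : R⟦X⟧) ∈ S := by
  induction p using Polynomial.induction_on' with
  | add p q hp hq => simpa using add_mem hp hq
  | monomial n c => simpa [monomial_eq_C_mul_X_pow] using mul_mem (hC c) (pow_mem hX n)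

theorem mem_of_X_pow_mul_mem (hdiv : ∀ r, X * r ∈ S → r ∈ S) (n : ℕ) {r : R⟦X⟧}
    (hr : X ^ n * r ∈ S) : r ∈ S := by
  induction n with
  | zero => simpa using hr
  | succ n ih => exact ih (hdiv _ (by rwa [← mul_assoc, ← pow_succ']))

theorem bijective_quotientMap_span_X_pow (hC : ∀ c, C c ∈ S) (hX : X ∈ S)
    (hdiv : ∀ r, X * r ∈ S → r ∈ S) (n : ℕ) :
    Bijective (Ideal.quotientMap (Ideal.span {X} ^ n) S.subtype
      (Ideal.pow_le_comap_pow (span_X_le_comap_span_X hX) n)) := by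
  refine ⟨Ideal.quotientMap_injective' fun s hs ↦ ?_, fun t ↦ ?_⟩
  · obtain ⟨r, hr⟩ : X ^ n ∣ (s : R⟦X⟧) := by
      simpa [Ideal.span_singleton_pow, Ideal.mem_span_singleton] using hs
    rw [Ideal.span_singleton_pow, Ideal.mem_span_singleton]
    exact ⟨⟨r, mem_of_X_pow_mul_mem hdiv n (hr ▸ s.2)⟩, Subtype.ext hr⟩
  · obtain ⟨t, rfl⟩ := Ideal.Quotient.mk_surjective t
    refine ⟨Ideal.Quotient.mk _ ⟨_, coe_polynomial_mem hC hX (trunc n t)⟩, ?_⟩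
    rw [Ideal.quotientMap_mk, Ideal.Quotient.eq, Ideal.span_singleton_pow,
      Ideal.mem_span_singleton]
    refine ⟨-mk fun i ↦ coeff (i + n) t, ?_⟩
    change (trunc n t : R⟦X⟧) - t = _
    linear_combination -eq_X_pow_mul_shift_add_trunc n t

theorem exists_adicCompletion_ringEquiv (hC : ∀ c, C c ∈ S) (hX : X ∈ S)
    (hdiv : ∀ r, X * r ∈ S → r ∈ S) :
    ∃ e : AdicCompletion (Ideal.span {(⟨X, hX⟩ : S)}) S ≃+* R⟦X⟧,
      ∀ a : S, e (algebraMap S _ a) = a :=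
  have hbij := bijective_quotientMap_span_X_pow hC hX hdiv
  ⟨AdicCompletion.ringEquivOfBijectiveQuotientMap (span_X_le_comap_span_X hX) hbij,
    AdicCompletion.ringEquivOfBijectiveQuotientMap_of _ hbij⟩

end PowerSeries

theorem Subfield.mem_of_mul_mem {F : Type*} [Field F] (L : Subfield F) {x y : F} (hx0 : x ≠ 0)
    (hx : x ∈ L) (hxy : x * y ∈ L) : y ∈ L := by
  simpa [hx0] using mul_mem (inv_mem hx) hxy

theorem isIntegralOverIdeal_mul {R : Type*} [CommRing R] (a b : R) :
    IsIntegralOverIdeal (Ideal.span {a ^ 2, b ^ 2}) (a * b) := by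
  have h12 : (1 : ℕ) ≠ 2 := by decide
  have hIcc : Finset.Icc 1 2 = {1, 2} := rfl
  refine ⟨2, two_pos, fun i ↦ if i = 2 then -(a ^ 2 * b ^ 2) else 0, fun i hi ↦ ?_, ?_⟩
  · rw [hIcc] at hi
    rcases Finset.mem_insert.1 hi with rfl | hi
    · simp
    · rw [Finset.mem_singleton.1 hi, sq (Ideal.span _)]
      exact neg_mem (Ideal.mul_mem_mul (Ideal.subset_span (by simp))
        (Ideal.subset_span (by simp)))
  · rw [hIcc, Finset.sum_pair h12]
    simp only [if_neg h12, if_pos]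
    ring

theorem not_isIntegrallyClosedIdeal_span_sq {R : Type*} [CommRing R] {a b : R}
    (h : a * b ∉ Ideal.span {a ^ 2, b ^ 2}) :
    ¬ IsIntegrallyClosedIdeal (Ideal.span {a ^ 2, b ^ 2}) :=
  fun hI ↦ h (hI _ (isIntegralOverIdeal_mul a b))

theorem MvPolynomial.mul_X_mul_X_notMem_span_sq {σ R : Type*} [CommRing R] {i j : σ}
    (hij : i ≠ j) {p : MvPolynomial σ R} (hp : constantCoeff p ≠ 0) :
    p * (X i * X j) ∉ Ideal.span {X i ^ 2, X j ^ 2} := by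
  rw [X_pow_eq_monomial, X_pow_eq_monomial, ← Set.image_pair (fun s ↦ monomial s (1 : R)),
    mem_ideal_span_monomial_image]
  intro h
  obtain ⟨d, hd, hle⟩ := h (Finsupp.single i 1 + Finsupp.single j 1) (by
    rw [mem_support_iff, X, X, monomial_mul, one_mul]
    simpa [coeff_mul_monomial', ← constantCoeff_eq] using hp)
  rcases hd with rfl | rfl
  · simpa [hij] using hle i
  · simpa [hij.symm] using hle j

theorem constantCoeff_ne_zero_of_mem_primeCompl_mP {p : P2 k} (hp : p ∈ (mP k).primeCompl) :
    MvPolynomial.constantCoeff p ≠ 0 := by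
  simpa [mP, MvPolynomial.aeval_zero'] using hp

theorem algebraMap_X_mul_X_notMem_span_sq {i j : Fin 2} (hij : i ≠ j) :
    algebraMap (P2 k) (Rloc k) (MvPolynomial.X i) *
        algebraMap (P2 k) (Rloc k) (MvPolynomial.X j) ∉
      Ideal.span {algebraMap (P2 k) (Rloc k) (MvPolynomial.X i) ^ 2,
        algebraMap (P2 k) (Rloc k) (MvPolynomial.X j) ^ 2} := by
  intro h
  simp only [← map_pow, ← Set.image_pair, ← Ideal.map_span, ← map_mul] at h
  obtain ⟨⟨⟨p, hp⟩, s⟩, hs⟩ :=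
    (IsLocalization.mem_map_algebraMap_iff (mP k).primeCompl (Rloc k)).1 h
  have hsp : (s : P2 k) * (MvPolynomial.X i * MvPolynomial.X j) = p := by
    refine IsLocalization.injective (Rloc k) (mP k).primeCompl_le_nonZeroDivisors ?_
    rw [map_mul, mul_comm, hs]
  exact MvPolynomial.mul_X_mul_X_notMem_span_sq hij
    (constantCoeff_ne_zero_of_mem_primeCompl_mP k s.2) (hsp ▸ hp)

theorem constantCoeff_emb {γ : PowerSeries k} (hγ : constantCoeff γ = 0) :
    constantCoeff (emb k γ) = 0 := by
  simp [emb, ← coeff_zero_eq_constantCoeff_apply, hγ]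

theorem mul_notMem_span_ff_gg (hα : constantCoeff α = 0) (hβ : constantCoeff β = 0) :
    (yy k - emb k α) * (zz k - emb k β) ∉ Ideal.span {ff k α, gg k β} := by
  intro h
  have := Ideal.mem_map_of_mem (constantCoeff (R := Rloc k)) h
  simp only [Ideal.map_span, Set.image_pair, ff, gg, yy, zz, map_pow, map_mul, map_sub,
    constantCoeff_C, constantCoeff_emb k hα, constantCoeff_emb k hβ, sub_zero] at this
  exact algebraMap_X_mul_X_notMem_span_sq k (by decide) this

theorem mem_AA_of_mul_mem {a r : Rstar k} (ha0 : a ≠ 0) (ha : a ∈ AA k α β)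
    (h : a * r ∈ AA k α β) : r ∈ AA k α β :=
  Subfield.mem_of_mul_mem (LL k α β)
    ((map_ne_zero_iff (ι k) (IsFractionRing.injective _ (K k))).2 ha0) ha (by rwa [← map_mul])

theorem C_algebraMap_mem_AA (p : P2 k) :
    PowerSeries.C (algebraMap (P2 k) (Rloc k) p) ∈ AA k α β := by
  induction p using MvPolynomial.induction_on with
  | C a => exact Subfield.subset_closure (Or.inl ⟨a, rfl⟩)
  | add p q hp hq => simpa using add_mem hp hq
  | mul_X p i hp =>
    rw [map_mul, map_mul]
    refine mul_mem hp (Subfield.subset_closure (Or.inr ?_))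
    fin_cases i
    · exact Or.inr (Or.inl rfl)
    · exact Or.inr (Or.inr (Or.inl rfl))

theorem C_mem_AA (c : Rloc k) : PowerSeries.C c ∈ AA k α β := by
  obtain ⟨⟨p, s⟩, hc⟩ := IsLocalization.surj (mP k).primeCompl c
  refine mem_AA_of_mul_mem k α β (a := PowerSeries.C (algebraMap _ _ (s : P2 k))) ?_
    (C_algebraMap_mem_AA k α β s) ?_
  · exact (map_ne_zero_iff _ C_injective).2 (IsLocalization.map_units (Rloc k) s).ne_zero
  · rw [← map_mul, mul_comm, hc]
    exact C_algebraMap_mem_AA k α β p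

theorem mem_AA_of_X_mul_mem {r : Rstar k} (h : PowerSeries.X * r ∈ AA k α β) :
    r ∈ AA k α β :=
  mem_AA_of_mul_mem k α β X_ne_zero (xx_mem k α β) h

theorem xA_adic_completion_eq_Rstar_and_PAstar_not_integrally_closed
    (hα : PowerSeries.constantCoeff α = 0) (hβ : PowerSeries.constantCoeff β = 0) :
    (∃ e : AdicCompletion (Ideal.span {(⟨xx k, xx_mem k α β⟩ : AA k α β)}) (AA k α β) ≃+*
        Rstar k,
      ∀ a : AA k α β, e (algebraMap (AA k α β) _ a) = (a : Rstar k)) ∧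
    ¬ IsIntegrallyClosedIdeal (Ideal.map (AA k α β).subtype (PP k α β)) := by
  refine ⟨PowerSeries.exists_adicCompletion_ringEquiv (C_mem_AA k α β) (xx_mem k α β)
    (fun _ ↦ mem_AA_of_X_mul_mem k α β), ?_⟩
  have hP : Ideal.map (AA k α β).subtype (PP k α β) = Ideal.span {ff k α, gg k β} := by
    rw [PP, Ideal.map_span, Set.image_pair]
    rfl
  rw [hP]
  exact not_isIntegrallyClosedIdeal_span_sq (mul_notMem_span_ff_gg k α β hα hβ)
end
end

section
/- In the formal power series ring k[[x,y,z]], the element ξ := (y−α)(z−β) satisfies ξ² = fg ∈ ((f,g))², hence ξ is integral over the ideal (f,g)k[[x,y,z]], but ξ ∉ (f,g)k[[x,y,z]]; consequently the ideal (f,g)k[[x,y,z]] is not integrally closed. -/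
noncomputable section

variable (k : Type) [Field k]

/-- `k[[x,y,z]]`, realized as the iterated power series ring `k[[z]][[y]][[x]]`. -/
abbrev T3 (k : Type) [Field k] := PowerSeries (PowerSeries (PowerSeries k))

/-- `x ∈ k[[x,y,z]]`. -/
def xT : T3 k := PowerSeries.X
/-- `y ∈ k[[x,y,z]]`. -/
def yT : T3 k := PowerSeries.C (R := _) PowerSeries.X
/-- `z ∈ k[[x,y,z]]`. -/
def zT : T3 k := PowerSeries.C (R := _) (PowerSeries.C (R := _) PowerSeries.X)

/-- The inclusion `k ⊆ k[[x,y,z]]`. -/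
def kT : k →+* T3 k :=
  (PowerSeries.C (R := _)).comp ((PowerSeries.C (R := _)).comp (PowerSeries.C (R := k)))

/-- The inclusion `k[[x]] ⊆ k[[x,y,z]]`. -/
def embT : PowerSeries k →+* T3 k :=
  PowerSeries.map ((PowerSeries.C (R := _)).comp (PowerSeries.C (R := k)))

/-- `f = (y - α)²` as an element of `k[[x,y,z]]`. -/
def fT (α : PowerSeries k) : T3 k := (yT k - embT k α) ^ 2
/-- `g = (z - β)²` as an element of `k[[x,y,z]]`. -/
def gT (β : PowerSeries k) : T3 k := (zT k - embT k β) ^ 2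

open PowerSeries

/-- In `R[[y]][[x]]`, `xy ∉ (x², y²)`: the `x`-linear part of an element of `(x², y²)` lies
in `y²·R[[y]]`, whereas that of `xy` is `y`. -/
theorem PowerSeries.X_mul_C_X_notMem_span_sq {R : Type*} [CommRing R] [Nontrivial R] :
    (X * C X : R⟦X⟧⟦X⟧) ∉ Ideal.span {X ^ 2, C X ^ 2} := by
  rw [Ideal.mem_span_pair]
  rintro ⟨a, b, hab⟩
  have hx : coeff 1 b * X ^ 2 = X := by
    simpa [← map_pow, coeff_mul_X_pow', coeff_mul_C, coeff_X_pow_mul'] using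
      congrArg (coeff 1) hab
  simpa [coeff_mul_X_pow'] using congrArg (coeff 1) hx

@[simp]
theorem constantCoeff_yT : constantCoeff (yT k) = X :=
  constantCoeff_C _

@[simp]
theorem constantCoeff_zT : constantCoeff (zT k) = C X :=
  constantCoeff_C _

@[simp]
theorem constantCoeff_embT (α : k⟦X⟧) : constantCoeff (embT k α) = C (C (constantCoeff α)) := by
  rw [embT, ← coeff_zero_eq_constantCoeff_apply, coeff_map, coeff_zero_eq_constantCoeff_apply]
  rfl

/-- Setting `x = 0` maps `(f, g)` into `(y², z²)` and `ξ` to `yz`. -/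
theorem yT_sub_mul_zT_sub_notMem_span {α β : k⟦X⟧}
    (hα : constantCoeff α = 0) (hβ : constantCoeff β = 0) :
    (yT k - embT k α) * (zT k - embT k β) ∉ Ideal.span {fT k α, gT k β} := fun hmem => by
  have := Ideal.mem_map_of_mem (constantCoeff (R := (k⟦X⟧)⟦X⟧)) hmem
  rw [Ideal.map_span, Set.image_pair] at this
  simp only [fT, gT, map_mul, map_pow, map_sub, constantCoeff_yT, constantCoeff_zT,
    constantCoeff_embT, hα, hβ, map_zero, sub_zero] at this
  exact X_mul_C_X_notMem_span_sq this

theorem isIntegralOverIdeal_of_pow_mem {R : Type*} [CommRing R] {I : Ideal R} {r : R} {n : ℕ}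
    (hn : 0 < n) (h : r ^ n ∈ I ^ n) : IsIntegralOverIdeal I r := by
  refine ⟨n, hn, fun i => if i = n then -r ^ n else 0, fun i _ => ?_, ?_⟩
  · dsimp only
    split_ifs with hi
    · subst hi
      exact neg_mem h
    · exact zero_mem _
  · simp [ite_mul, Finset.sum_ite_eq', Nat.one_le_iff_ne_zero.mpr hn.ne']

/-- In `k[[x,y,z]]`, with `α, β ∈ x·k[[x]]`, `f = (y-α)²`, `g = (z-β)²`,
the element `ξ = (y-α)(z-β)` satisfies `ξ² = fg ∈ (f,g)²`, hence is integral over `(f,g)`,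
but `ξ ∉ (f,g)`; consequently `(f,g)` is not integrally closed. -/
theorem xi_integral_not_mem (α β : PowerSeries k)
    (hα : PowerSeries.constantCoeff (R := k) α = 0) (hβ : PowerSeries.constantCoeff (R := k) β = 0) :
    ((yT k - embT k α) * (zT k - embT k β)) ^ 2 = fT k α * gT k β ∧
    fT k α * gT k β ∈ (Ideal.span {fT k α, gT k β}) ^ 2 ∧
    IsIntegralOverIdeal (Ideal.span {fT k α, gT k β})
      ((yT k - embT k α) * (zT k - embT k β)) ∧
    (yT k - embT k α) * (zT k - embT k β) ∉ Ideal.span {fT k α, gT k β} ∧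
    ¬ IsIntegrallyClosedIdeal (Ideal.span {fT k α, gT k β}) := by
  have hξ : ((yT k - embT k α) * (zT k - embT k β)) ^ 2 = fT k α * gT k β := by
    rw [fT, gT]; ring
  have hfg : fT k α * gT k β ∈ Ideal.span {fT k α, gT k β} ^ 2 :=
    pow_two (Ideal.span {fT k α, gT k β}) ▸
      Ideal.mul_mem_mul (Ideal.subset_span (by simp)) (Ideal.subset_span (by simp))
  have hint := isIntegralOverIdeal_of_pow_mem two_pos (hξ ▸ hfg)
  have hnot := yT_sub_mul_zT_sub_notMem_span k hα hβ
  exact ⟨hξ, hfg, hint, hnot, fun hcl => hnot (hcl _ hint)⟩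
end
end

section
/- Let R be a commutative ring with identity, let I be an ideal of R and let r ∈ R. Then r is integral over I if and only if there is a positive integer n such that I·Jⁿ⁻¹ = Jⁿ, where J = I + (r) is the ideal generated by I and r. -/
private lemma pow_le_pow_left_ideal {R : Type*} [CommRing R] {I J : Ideal R} (h : I ≤ J) :
    ∀ n : ℕ, I ^ n ≤ J ^ n := by
  intro n
  induction n with
  | zero => simp
  | succ n ih =>
      rw [pow_succ, pow_succ]
      exact Ideal.mul_mono ih h

/-- Expansion of an element of `I * (I + (r))^m` as a combination `∑ aᵢ r^(m+1-i)`
with `aᵢ ∈ Iⁱ`. -/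
private lemma expand_aux {R : Type*} [CommRing R] (I : Ideal R) (r : R) :
    ∀ (m : ℕ) (x : R), x ∈ I * (I + Ideal.span {r}) ^ m →
      ∃ a : ℕ → R, (∀ i ∈ Finset.Icc 1 (m + 1), a i ∈ I ^ i) ∧
        x = ∑ i ∈ Finset.Icc 1 (m + 1), a i * r ^ (m + 1 - i) := by
  intro m
  induction m with
  | zero =>
      intro x hx
      rw [pow_zero, mul_one] at hx
      refine ⟨fun _ => x, ?_, ?_⟩
      · intro i hi
        simp only [Finset.mem_Icc] at hi
        obtain rfl : i = 1 := le_antisymm hi.2 hi.1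
        simpa using hx
      · simp
  | succ m ih =>
      intro x hx
      have hrw : I * (I + Ideal.span {r}) ^ (m + 1)
          = (I * (I + Ideal.span {r}) ^ m) * I
            + (I * (I + Ideal.span {r}) ^ m) * Ideal.span {r} := by
        ring
      rw [hrw] at hx
      rcases Submodule.mem_sup.mp hx with ⟨y, hy, z, hz, rfl⟩
      -- handle z ∈ (I * J^m) * span {r}
      rcases Ideal.mem_mul_span_singleton.mp hz with ⟨w, hw, hzeq⟩
      obtain ⟨b, hb, hweq⟩ := ih w hw
      -- handle y ∈ (I * J^m) * I by mul_induction
      have hy' : ∃ c : ℕ → R, (∀ i ∈ Finset.Icc 1 (m + 2), c i ∈ I ^ i) ∧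
          y = ∑ i ∈ Finset.Icc 1 (m + 2), c i * r ^ (m + 2 - i) := by
        refine Submodule.mul_induction_on hy ?_ ?_
        · intro w' hw' c0 hc0
          obtain ⟨b', hb', hw'eq⟩ := ih w' hw'
          refine ⟨fun j => if j ∈ Finset.Icc 2 (m + 2) then b' (j - 1) * c0 else 0, ?_, ?_⟩
          · intro j hj
            by_cases h2 : j ∈ Finset.Icc 2 (m + 2)
            · simp only [h2, if_true]
              simp only [Finset.mem_Icc] at h2
              have hjj : j = (j - 1) + 1 := by omega
              rw [hjj, pow_succ]
              exact Ideal.mul_mem_mul (hb' (j - 1) (by simp only [Finset.mem_Icc]; omega)) hc0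
            · simp [h2]
          · have hsplit : Finset.Icc 1 (m + 2) = insert 1 (Finset.Icc 2 (m + 2)) := by
              ext j
              simp only [Finset.mem_Icc, Finset.mem_insert]
              omega
            rw [hsplit, Finset.sum_insert (by simp)]
            have h1 : (1 : ℕ) ∉ Finset.Icc 2 (m + 2) := by simp
            simp only [h1, if_false, zero_mul, zero_add]
            have hmap : Finset.Icc 2 (m + 2)
                = (Finset.Icc 1 (m + 1)).map (addRightEmbedding 1) := by
              rw [Finset.map_add_right_Icc]
            rw [hw'eq, Finset.sum_mul]
            have hstep : ∑ j ∈ Finset.Icc 2 (m + 2),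
                (if j ∈ Finset.Icc 2 (m + 2) then b' (j - 1) * c0 else 0) * r ^ (m + 2 - j)
                = ∑ j ∈ Finset.Icc 2 (m + 2), b' (j - 1) * c0 * r ^ (m + 2 - j) :=
              Finset.sum_congr rfl fun j hj => by rw [if_pos hj]
            rw [hstep, hmap, Finset.sum_map]
            refine Finset.sum_congr rfl ?_
            intro i hi
            simp only [Finset.mem_Icc] at hi
            simp only [addRightEmbedding_apply]
            have h2 : m + 2 - (i + 1) = m + 1 - i := by omega
            have h3 : i + 1 - 1 = i := by omega
            rw [h2, h3]
            ring
        · rintro y₁ y₂ ⟨c₁, hc₁, rfl⟩ ⟨c₂, hc₂, rfl⟩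
          refine ⟨c₁ + c₂, fun i hi => add_mem (hc₁ i hi) (hc₂ i hi), ?_⟩
          rw [← Finset.sum_add_distrib]
          exact Finset.sum_congr rfl fun i _ => by simp [add_mul]
      obtain ⟨c, hc, hyeq⟩ := hy'
      -- assemble
      refine ⟨fun j => c j + (if j ≤ m + 1 then b j else 0), ?_, ?_⟩
      · intro i hi
        refine add_mem (hc i hi) ?_
        by_cases h1 : i ≤ m + 1
        · simp only [h1, if_true]
          exact hb i (by simp only [Finset.mem_Icc] at hi ⊢; omega)
        · simp [h1]
      · have hz' : z = ∑ i ∈ Finset.Icc 1 (m + 2),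
            (if i ≤ m + 1 then b i else 0) * r ^ (m + 2 - i) := by
          rw [← hzeq, hweq, Finset.sum_mul]
          rw [← Finset.sum_subset (Finset.Icc_subset_Icc_right (by omega : m + 1 ≤ m + 2))
            (fun j hj hj' => ?_)]
          · refine Finset.sum_congr rfl ?_
            intro i hi
            simp only [Finset.mem_Icc] at hi
            rw [if_pos hi.2]
            have h2 : m + 2 - i = (m + 1 - i) + 1 := by omega
            rw [h2, pow_succ]
            ring
          · simp only [Finset.mem_Icc] at hj hj'
            have : ¬ j ≤ m + 1 := by omega
            rw [if_neg this, zero_mul]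
        rw [hyeq, hz', ← Finset.sum_add_distrib]
        exact Finset.sum_congr rfl fun i _ => by simp [add_mul]

private lemma pow_le_aux {R : Type*} [CommRing R] (I : Ideal R) (r : R) (n : ℕ)
    (h : r ^ n ∈ I * (I + Ideal.span {r}) ^ (n - 1)) :
    ∀ k j, k + j = n →
      (I + Ideal.span {r}) ^ k * Ideal.span {r} ^ j ≤ I * (I + Ideal.span {r}) ^ (n - 1) := by
  intro k
  induction k with
  | zero =>
      intro j hj
      have hj' : j = n := by omega
      subst hj'
      rw [pow_zero, one_mul, Ideal.span_singleton_pow, Ideal.span_le, Set.singleton_subset_iff]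
      exact h
  | succ k ih =>
      intro j hj
      have h1 : (I + Ideal.span {r}) ^ (k + 1) * Ideal.span {r} ^ j
          = (I + Ideal.span {r}) ^ k * Ideal.span {r} ^ j * I
            + (I + Ideal.span {r}) ^ k * Ideal.span {r} ^ (j + 1) := by ring
      rw [h1]
      refine sup_le ?_ (ih (j + 1) (by omega))
      have h2 : (I + Ideal.span {r}) ^ k * Ideal.span {r} ^ j
          ≤ (I + Ideal.span {r}) ^ (n - 1) := by
        have harith : k + j = n - 1 := by omega
        calc (I + Ideal.span {r}) ^ k * Ideal.span {r} ^ j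
            ≤ (I + Ideal.span {r}) ^ k * (I + Ideal.span {r}) ^ j :=
              Ideal.mul_mono_right (pow_le_pow_left_ideal le_sup_right j)
          _ = (I + Ideal.span {r}) ^ (n - 1) := by rw [← pow_add, harith]
      calc (I + Ideal.span {r}) ^ k * Ideal.span {r} ^ j * I
          ≤ (I + Ideal.span {r}) ^ (n - 1) * I := Ideal.mul_mono_left h2
        _ = I * (I + Ideal.span {r}) ^ (n - 1) := mul_comm _ _

/-- `r` is integral over the ideal `I` if and only if
`I·Jⁿ⁻¹ = Jⁿ` for some positive integer `n`, where `J = I + (r)`. -/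
theorem isIntegralOverIdeal_iff_reduction {R : Type*} [CommRing R] (I : Ideal R) (r : R) :
    IsIntegralOverIdeal I r ↔
      ∃ n : ℕ, 0 < n ∧
        I * (I + Ideal.span {r}) ^ (n - 1) = (I + Ideal.span {r}) ^ n := by
  constructor
  · rintro ⟨n, hn, a, ha, heq⟩
    refine ⟨n, hn, le_antisymm ?_ ?_⟩
    · have hpow : (I + Ideal.span {r}) ^ n
          = (I + Ideal.span {r}) ^ (n - 1) * (I + Ideal.span {r}) := by
        rw [← pow_succ]
        congr 1
        omega
      rw [hpow, mul_comm I]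
      exact Ideal.mul_mono_right le_sup_left
    · have hrn : r ^ n ∈ I * (I + Ideal.span {r}) ^ (n - 1) := by
        have heq' : r ^ n = ∑ i ∈ Finset.Icc 1 n, -(a i * r ^ (n - i)) := by
          rw [Finset.sum_neg_distrib]
          exact eq_neg_of_add_eq_zero_left heq
        rw [heq']
        refine Submodule.sum_mem _ fun i hi => ?_
        have h1 : -(a i * r ^ (n - i)) = -(a i) * r ^ (n - i) := by ring
        rw [h1]
        have hmem : -(a i) * r ^ (n - i) ∈ I ^ i * Ideal.span {r} ^ (n - i) :=
          Ideal.mul_mem_mul (neg_mem (ha i hi))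
            (by rw [Ideal.span_singleton_pow]; exact Ideal.mem_span_singleton_self _)
        simp only [Finset.mem_Icc] at hi
        obtain ⟨i', rfl⟩ : ∃ i', i = i' + 1 := ⟨i - 1, by omega⟩
        have hle : I ^ (i' + 1) * Ideal.span {r} ^ (n - (i' + 1))
            ≤ I * (I + Ideal.span {r}) ^ (n - 1) := by
          have harith : i' + (n - (i' + 1)) = n - 1 := by omega
          calc I ^ (i' + 1) * Ideal.span {r} ^ (n - (i' + 1))
              = I * (I ^ i' * Ideal.span {r} ^ (n - (i' + 1))) := by ring
            _ ≤ I * ((I + Ideal.span {r}) ^ i' * (I + Ideal.span {r}) ^ (n - (i' + 1))) :=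
                Ideal.mul_mono_right (Ideal.mul_mono
                  (pow_le_pow_left_ideal le_sup_left i')
                  (pow_le_pow_left_ideal le_sup_right _))
            _ = I * (I + Ideal.span {r}) ^ (n - 1) := by rw [← pow_add, harith]
        exact hle hmem
      have := pow_le_aux I r n hrn n 0 (by omega)
      simpa using this
  · rintro ⟨n, hn, hred⟩
    have hrn : r ^ n ∈ I * (I + Ideal.span {r}) ^ (n - 1) := by
      rw [hred]
      exact Ideal.pow_mem_pow (Submodule.mem_sup_right (Ideal.mem_span_singleton_self r)) n
    obtain ⟨a, ha, heq⟩ := expand_aux I r (n - 1) (r ^ n) hrn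
    have hn1 : n - 1 + 1 = n := by omega
    rw [hn1] at ha heq
    refine ⟨n, hn, fun i => -(a i), fun i hi => neg_mem (ha i hi), ?_⟩
    have hsum : ∑ i ∈ Finset.Icc 1 n, -(a i) * r ^ (n - i)
        = -∑ i ∈ Finset.Icc 1 n, a i * r ^ (n - i) := by
      rw [← Finset.sum_neg_distrib]
      exact Finset.sum_congr rfl fun i _ => by ring
    rw [hsum, ← heq, add_neg_cancel]
end

section
/- Let (A, n) be a Noetherian local ring and let Â be the n-adic completion of A. If I is an n-primary ideal of A, then I is a reduction of a properly larger ideal of A if and only if IÂ is a reduction of a properly larger ideal of Â; consequently I is integrally closed in A if and only if IÂ is integrally closed in Â. -/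
/-!
For an ideal `J` of `A` containing a power of `𝔪`, evaluation `Â → A ⧸ J` identifies `A ⧸ J` with
`Â ⧸ JÂ`: the kernel of `Â → A ⧸ 𝔪ᵏ` is `𝔪ᵏÂ` because `𝔪` is finitely generated. So extension and
contraction are inverse bijections between ideals of `A` containing `I` and ideals of `Â` containing
`IÂ`, compatible with products; as `Iⁿ` again contains a power of `𝔪`, an equation `I Jⁿ⁻¹ = Jⁿ`
holds in `A` iff it holds after extension. An equation of integral dependence of degree `n` over
`IÂ` is congruent modulo `IⁿÂ` to one over `A` up to an error in `Iⁿ`, which is absorbed into the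
last coefficient.
-/

noncomputable section

/-- `I` is a reduction of `J`: `I ⊆ J` and `I·Jⁿ⁻¹ = Jⁿ` for some positive integer `n`. -/
def IsReductionOf {R : Type*} [CommRing R] (I J : Ideal R) : Prop :=
  I ≤ J ∧ ∃ n : ℕ, 0 < n ∧ I * J ^ (n - 1) = J ^ n

namespace Ideal

variable {A B : Type*} [CommRing A] [CommRing B] [Algebra A B]

variable (B) in
/-- The canonical map `A ⧸ J → B ⧸ J B` is an isomorphism, recorded through its inverse
`B → B ⧸ J B ≃ A ⧸ J`. -/
def HasQuotientRetraction (J : Ideal A) : Prop :=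
  ∃ φ : B →ₐ[A] A ⧸ J, RingHom.ker φ ≤ J.map (algebraMap A B)

theorem map_algebraMap_le_ker {J : Ideal A} (φ : B →ₐ[A] A ⧸ J) :
    J.map (algebraMap A B) ≤ RingHom.ker φ := by
  rw [map_le_iff_le_comap]
  intro a ha
  rwa [mem_comap, RingHom.mem_ker, AlgHom.commutes, Quotient.algebraMap_eq,
    Quotient.eq_zero_iff_mem]

theorem comap_map_algebraMap_of_algHom {J : Ideal A} (φ : B →ₐ[A] A ⧸ J) :
    (J.map (algebraMap A B)).comap (algebraMap A B) = J := by
  refine le_antisymm (fun a ha => ?_) le_comap_map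
  have h : φ (algebraMap A B a) = 0 := map_algebraMap_le_ker φ ha
  rwa [AlgHom.commutes, Quotient.algebraMap_eq, Quotient.eq_zero_iff_mem] at h

namespace HasQuotientRetraction

variable {N J : Ideal A}

theorem comap_map_eq (h : HasQuotientRetraction B J) :
    (J.map (algebraMap A B)).comap (algebraMap A B) = J :=
  h.elim fun φ _ => comap_map_algebraMap_of_algHom φ

theorem exists_sub_algebraMap_mem (h : HasQuotientRetraction B N) (b : B) :
    ∃ a : A, b - algebraMap A B a ∈ N.map (algebraMap A B) := by
  obtain ⟨φ, hφ⟩ := h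
  obtain ⟨a, ha⟩ := Quotient.mk_surjective (φ b)
  refine ⟨a, hφ ?_⟩
  rw [RingHom.mem_ker, map_sub, AlgHom.commutes, Quotient.algebraMap_eq, ha, sub_self]

theorem mono (h : HasQuotientRetraction B N) (hNJ : N ≤ J) : HasQuotientRetraction B J := by
  refine ⟨(Quotient.factorₐ A hNJ).comp h.choose, fun b hb => ?_⟩
  obtain ⟨a, ha⟩ := h.exists_sub_algebraMap_mem b
  have hNJ' : N.map (algebraMap A B) ≤ J.map (algebraMap A B) := map_mono hNJ
  have haJ : a ∈ J := by
    have h0 := sub_mem hb (map_algebraMap_le_ker _ (hNJ' ha))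
    rwa [sub_sub_cancel, RingHom.mem_ker, AlgHom.commutes, Quotient.algebraMap_eq,
      Quotient.eq_zero_iff_mem] at h0
  rw [← add_sub_cancel (algebraMap A B a) b]
  exact add_mem (mem_map_of_mem _ haJ) (hNJ' ha)

theorem map_comap_eq (h : HasQuotientRetraction B N) {J' : Ideal B}
    (hNJ' : N.map (algebraMap A B) ≤ J') :
    (J'.comap (algebraMap A B)).map (algebraMap A B) = J' := by
  refine le_antisymm map_comap_le fun b hb => ?_
  obtain ⟨a, ha⟩ := h.exists_sub_algebraMap_mem b
  have haJ' : algebraMap A B a ∈ J' := by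
    simpa using sub_mem hb (hNJ' ha)
  rw [← add_sub_cancel (algebraMap A B a) b]
  exact add_mem (mem_map_of_mem _ haJ')
    (map_mono (map_le_iff_le_comap.mp hNJ') ha)

end HasQuotientRetraction

end Ideal

section IntegralOverIdeal

variable {R S : Type*} [CommRing R] [CommRing S] {I : Ideal R} {r : R}

theorem IsIntegralOverIdeal.map (g : R →+* S) (h : IsIntegralOverIdeal I r) :
    IsIntegralOverIdeal (I.map g) (g r) := by
  obtain ⟨n, hn, a, ha, hr⟩ := h
  refine ⟨n, hn, g ∘ a, fun i hi => ?_, by simpa using congrArg g hr⟩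
  rw [← Ideal.map_pow]
  exact Ideal.mem_map_of_mem g (ha i hi)

theorem isIntegralOverIdeal_of_mem_pow {n : ℕ} (hn : 0 < n) {a : ℕ → R}
    (ha : ∀ i ∈ Finset.Icc 1 n, a i ∈ I ^ i)
    (hr : r ^ n + ∑ i ∈ Finset.Icc 1 n, a i * r ^ (n - i) ∈ I ^ n) :
    IsIntegralOverIdeal I r := by
  set s := r ^ n + ∑ i ∈ Finset.Icc 1 n, a i * r ^ (n - i)
  refine ⟨n, hn, fun i => a i - if i = n then s else 0, fun i hi => ?_, ?_⟩
  · dsimp only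
    split_ifs with h
    · exact sub_mem (ha i hi) (h ▸ hr)
    · simpa using ha i hi
  · have hnmem : n ∈ Finset.Icc 1 n := Finset.mem_Icc.mpr ⟨hn, le_rfl⟩
    simp only [sub_mul, Finset.sum_sub_distrib, ite_mul, zero_mul, Finset.sum_ite_eq',
      if_pos hnmem, Nat.sub_self, pow_zero, mul_one]
    ring

end IntegralOverIdeal

section Transfer

variable {A B : Type*} [CommRing A] [CommRing B] [Algebra A B] {I : Ideal A}

theorem IsIntegralOverIdeal.exists_sub_algebraMap_mem
    (hI : ∀ m, (I ^ m).HasQuotientRetraction B) {b : B}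
    (hb : IsIntegralOverIdeal (I.map (algebraMap A B)) b) :
    ∃ r : A, IsIntegralOverIdeal I r ∧ b - algebraMap A B r ∈ I.map (algebraMap A B) := by
  obtain ⟨n, hn, β, hβ, hb⟩ := hb
  obtain ⟨r, hr⟩ := (hI n).exists_sub_algebraMap_mem b
  choose a ha using fun i => (hI n).exists_sub_algebraMap_mem (β i)
  have haI : ∀ i ∈ Finset.Icc 1 n, a i ∈ I ^ i := by
    intro i hi
    have hin : I ^ n ≤ I ^ i := Ideal.pow_le_pow_right (Finset.mem_Icc.mp hi).2
    rw [← ((hI n).mono hin).comap_map_eq, Ideal.mem_comap]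
    have hβi : β i ∈ (I ^ i).map (algebraMap A B) := by rw [Ideal.map_pow]; exact hβ i hi
    simpa using sub_mem hβi (Ideal.map_mono hin (ha i))
  have hs : r ^ n + ∑ i ∈ Finset.Icc 1 n, a i * r ^ (n - i) ∈ I ^ n := by
    rw [← (hI n).comap_map_eq, Ideal.mem_comap, ← Ideal.Quotient.eq_zero_iff_mem]
    set N := (I ^ n).map (algebraMap A B)
    have hr' : Ideal.Quotient.mk N (algebraMap A B r) = Ideal.Quotient.mk N b :=
      ((Ideal.Quotient.mk_eq_mk_iff_sub_mem _ _).mpr hr).symm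
    have ha' : ∀ i, Ideal.Quotient.mk N (algebraMap A B (a i)) = Ideal.Quotient.mk N (β i) :=
      fun i => ((Ideal.Quotient.mk_eq_mk_iff_sub_mem _ _).mpr (ha i)).symm
    calc _ = Ideal.Quotient.mk N (b ^ n + ∑ i ∈ Finset.Icc 1 n, β i * b ^ (n - i)) := by
          simp only [map_add, map_pow, map_sum, map_mul, hr', ha']
      _ = 0 := by rw [hb, _root_.map_zero]
  exact ⟨r, isIntegralOverIdeal_of_mem_pow hn haI hs, Ideal.map_mono (Ideal.pow_le_self hn.ne') hr⟩

theorem isIntegrallyClosedIdeal_iff_map (hI : ∀ m, (I ^ m).HasQuotientRetraction B) :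
    IsIntegrallyClosedIdeal I ↔ IsIntegrallyClosedIdeal (I.map (algebraMap A B)) := by
  have hI₁ : I.HasQuotientRetraction B := by simpa using hI 1
  constructor
  · intro hIC b hb
    obtain ⟨r, hr, hbr⟩ := hb.exists_sub_algebraMap_mem hI
    rw [← sub_add_cancel b (algebraMap A B r)]
    exact add_mem hbr (Ideal.mem_map_of_mem _ (hIC r hr))
  · intro hIC r hr
    rw [← hI₁.comap_map_eq]
    exact hIC _ (hr.map (algebraMap A B))

theorem Ideal.exists_lt_isReductionOf_iff_map (hI : ∀ m, (I ^ m).HasQuotientRetraction B) :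
    (∃ J : Ideal A, I < J ∧ IsReductionOf I J) ↔
      ∃ J' : Ideal B, I.map (algebraMap A B) < J' ∧
        IsReductionOf (I.map (algebraMap A B)) J' := by
  have hI₁ : I.HasQuotientRetraction B := by simpa using hI 1
  constructor
  · rintro ⟨J, hIJ, -, n, hn, hred⟩
    refine ⟨J.map (algebraMap A B), lt_of_le_of_ne (Ideal.map_mono hIJ.le) fun h => hIJ.ne ?_,
      Ideal.map_mono hIJ.le, n, hn, by rw [← Ideal.map_pow, ← Ideal.map_pow, ← Ideal.map_mul, hred]⟩
    rw [← hI₁.comap_map_eq, ← (hI₁.mono hIJ.le).comap_map_eq, h]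
  · rintro ⟨J', hIJ', -, n, hn, hred⟩
    set J := J'.comap (algebraMap A B)
    have hJ : J.map (algebraMap A B) = J' := hI₁.map_comap_eq hIJ'.le
    have hIJ : I ≤ J := Ideal.le_comap_map.trans (Ideal.comap_mono hIJ'.le)
    refine ⟨J, lt_of_le_of_ne hIJ fun h => hIJ'.ne (by rw [h, hJ]), hIJ, n, hn, ?_⟩
    have hpow_le : I ^ n ≤ I * J ^ (n - 1) := by
      calc I ^ n = I * I ^ (n - 1) := by rw [← pow_succ', Nat.sub_add_cancel hn]
        _ ≤ I * J ^ (n - 1) := Ideal.mul_mono_right (Ideal.pow_right_mono hIJ _)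
    have hmap : (I * J ^ (n - 1)).map (algebraMap A B) = (J ^ n).map (algebraMap A B) := by
      rw [Ideal.map_mul, Ideal.map_pow, Ideal.map_pow, hJ, hred]
    rw [← ((hI n).mono hpow_le).comap_map_eq, hmap,
      ((hI n).mono (Ideal.pow_right_mono hIJ n)).comap_map_eq]

end Transfer

theorem AdicCompletion.ker_evalₐ_eq_map {A : Type*} [CommRing A] {I : Ideal A} (hI : I.FG) (n : ℕ) :
    RingHom.ker (AdicCompletion.evalₐ I n) = (I ^ n).map (algebraMap A (AdicCompletion I A)) := by
  ext x
  have hpow : (I ^ n • ⊤ : Ideal A) = I ^ n := by simp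
  have hfactor : Function.Injective (Ideal.Quotient.factor hpow.le) := by
    simpa [RingHom.injective_iff_ker_eq_bot, Ideal.Quotient.factor_ker]
      using Ideal.map_mk_eq_bot_of_le hpow.ge
  have heval : AdicCompletion.evalₐ I n x = 0 ↔ AdicCompletion.eval I A n x = 0 := by
    rw [← AdicCompletion.factor_eval_eq_evalₐ I x hpow.le]
    exact map_eq_zero_iff _ hfactor
  rw [RingHom.mem_ker, heval, ← LinearMap.mem_ker,
    ← AdicCompletion.pow_smul_top_eq_ker_eval hI, Ideal.smul_top_eq_map,
    Submodule.restrictScalars_mem]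

theorem Ideal.hasQuotientRetraction_adicCompletion_of_pow_le {A : Type*} [CommRing A]
    {I J : Ideal A} (hI : I.FG) {n : ℕ} (hJ : I ^ n ≤ J) :
    J.HasQuotientRetraction (AdicCompletion I A) :=
  HasQuotientRetraction.mono ⟨AdicCompletion.evalₐ I n, (AdicCompletion.ker_evalₐ_eq_map hI n).le⟩
    hJ

theorem primary_reduction_iff_reduction_in_completion_general
    (A : Type*) [CommRing A] [IsNoetherianRing A] [IsLocalRing A]
    (I : Ideal A) (hrad : I.radical = IsLocalRing.maximalIdeal A) :
    ((∃ J : Ideal A, I < J ∧ IsReductionOf I J) ↔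
      (∃ J' : Ideal (AdicCompletion (IsLocalRing.maximalIdeal A) A),
        Ideal.map (algebraMap A (AdicCompletion (IsLocalRing.maximalIdeal A) A)) I < J' ∧
        IsReductionOf
          (Ideal.map (algebraMap A (AdicCompletion (IsLocalRing.maximalIdeal A) A)) I) J')) ∧
    (IsIntegrallyClosedIdeal I ↔
      IsIntegrallyClosedIdeal
        (Ideal.map (algebraMap A (AdicCompletion (IsLocalRing.maximalIdeal A) A)) I)) := by
  obtain ⟨k, hk⟩ := Ideal.exists_radical_pow_le_of_fg I (IsNoetherian.noetherian _)
  rw [hrad] at hk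
  have hI : ∀ m, (I ^ m).HasQuotientRetraction
      (AdicCompletion (IsLocalRing.maximalIdeal A) A) := fun m =>
    Ideal.hasQuotientRetraction_adicCompletion_of_pow_le (IsNoetherian.noetherian _)
      (by rw [pow_mul]; exact Ideal.pow_right_mono hk m)
  exact ⟨Ideal.exists_lt_isReductionOf_iff_map hI, isIntegrallyClosedIdeal_iff_map hI⟩

/-- For an `n`-primary ideal `I` of a Noetherian local ring `(A, n)`,
`I` is a reduction of a properly larger ideal of `A` iff `IÂ` is a reduction of a properly
larger ideal of the `n`-adic completion `Â`; consequently `I` is integrally closed iff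
`IÂ` is integrally closed. -/
theorem primary_reduction_iff_reduction_in_completion
    (A : Type*) [CommRing A] [IsNoetherianRing A] [IsLocalRing A]
    (I : Ideal A) (hprim : I.IsPrimary) (hrad : I.radical = IsLocalRing.maximalIdeal A) :
    ((∃ J : Ideal A, I < J ∧ IsReductionOf I J) ↔
      (∃ J' : Ideal (AdicCompletion (IsLocalRing.maximalIdeal A) A),
        Ideal.map (algebraMap A (AdicCompletion (IsLocalRing.maximalIdeal A) A)) I < J' ∧
        IsReductionOf
          (Ideal.map (algebraMap A (AdicCompletion (IsLocalRing.maximalIdeal A) A)) I) J')) ∧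
    (IsIntegrallyClosedIdeal I ↔
      IsIntegrallyClosedIdeal
        (Ideal.map (algebraMap A (AdicCompletion (IsLocalRing.maximalIdeal A) A)) I)) :=
  primary_reduction_iff_reduction_in_completion_general A I hrad
end
end

section
/- Let R be a commutative ring and let R' be an R-algebra such that for every prime ideal P' of R' the localization R'_{P'} is an integrally closed domain. Then for every a ∈ R the extension aR' of the principal ideal aR is an integrally closed ideal of R'. In particular, if (A, n) is a Noetherian local domain whose n-adic completion Â is a normal (integrally closed) domain, then aÂ is integrally closed for every a ∈ A. -/
noncomputable section

/-- In an integrally closed domain, every principal ideal is integrally closed. -/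
lemma principal_isIntegrallyClosedIdeal {S : Type*} [CommRing S] [IsDomain S]
    [IsIntegrallyClosed S] (b : S) : IsIntegrallyClosedIdeal (Ideal.span {b}) := by
  rintro r ⟨n, hn, a, ha, heq⟩
  by_cases hb : b = 0
  · subst hb
    rw [Ideal.span_singleton_eq_bot.mpr rfl] at ha ⊢
    have hz : ∀ i ∈ Finset.Icc 1 n, a i * r ^ (n - i) = 0 := by
      intro i hi
      have h1 : (1 : ℕ) ≤ i := (Finset.mem_Icc.mp hi).1
      have := Ideal.pow_le_self (I := (⊥ : Ideal S)) (by omega) (ha i hi)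
      rw [Ideal.mem_bot] at this
      simp [this]
    rw [Finset.sum_eq_zero hz, add_zero] at heq
    have : r = 0 := pow_eq_zero_iff (by omega) |>.mp heq
    simp [this, Ideal.mem_bot]
  · -- choose coefficients c i with a i = c i * b ^ i
    have hc : ∀ i ∈ Finset.Icc 1 n, ∃ c : S, a i = c * b ^ i := by
      intro i hi
      have := ha i hi
      rw [Ideal.span_singleton_pow, Ideal.mem_span_singleton] at this
      obtain ⟨c, hc⟩ := this
      exact ⟨c, by rw [hc, mul_comm]⟩
    choose! c hc using hc
    set K := FractionRing S
    set f : S →+* K := algebraMap S K with hf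
    have finj : Function.Injective f := IsFractionRing.injective S K
    have hfb : f b ≠ 0 := fun h => hb (finj (by simpa using h))
    set x : K := f r / f b with hx
    have hxb : x * f b = f r := div_mul_cancel₀ _ hfb
    -- x is integral over S
    have hint : IsIntegral S x := by
      refine ⟨Polynomial.X ^ n + ∑ i ∈ Finset.Icc 1 n, Polynomial.C (c i) * Polynomial.X ^ (n - i),
        Polynomial.monic_X_pow_add ?_, ?_⟩
      · refine lt_of_le_of_lt (Polynomial.degree_sum_le _ _) ?_
        rw [Finset.sup_lt_iff (by exact_mod_cast WithBot.bot_lt_coe n)]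
        intro i hi
        have h1 : (1 : ℕ) ≤ i := (Finset.mem_Icc.mp hi).1
        have h2 : i ≤ n := (Finset.mem_Icc.mp hi).2
        refine lt_of_le_of_lt (Polynomial.degree_C_mul_X_pow_le _ _) ?_
        exact_mod_cast Nat.cast_lt.mpr (show n - i < n by omega)
      · have key : (Polynomial.aeval x (Polynomial.X ^ n +
            ∑ i ∈ Finset.Icc 1 n, Polynomial.C (c i) * Polynomial.X ^ (n - i))) * f b ^ n
            = f (r ^ n + ∑ i ∈ Finset.Icc 1 n, a i * r ^ (n - i)) := by
          rw [map_add, map_pow, Polynomial.aeval_X, map_sum, add_mul, map_add, map_pow,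
            Finset.sum_mul, map_sum]
          congr 1
          · rw [← mul_pow, hxb]
          · refine Finset.sum_congr rfl fun i hi => ?_
            have h1 : (1 : ℕ) ≤ i := (Finset.mem_Icc.mp hi).1
            have h2 : i ≤ n := (Finset.mem_Icc.mp hi).2
            rw [map_mul, Polynomial.aeval_C, map_pow, Polynomial.aeval_X, hc i hi]
            have hbn : f b ^ n = f b ^ i * f b ^ (n - i) := by
              rw [← pow_add]; congr 1; omega
            rw [map_mul, map_mul, map_pow, map_pow]
            calc (algebraMap S K) (c i) * x ^ (n - i) * f b ^ n
                = f (c i) * f b ^ i * ((x * f b) ^ (n - i)) := by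
                  rw [hbn, mul_pow]; ring
              _ = f (c i) * f b ^ i * f r ^ (n - i) := by rw [hxb]
        rw [heq, map_zero] at key
        exact (mul_eq_zero.mp key).resolve_right (pow_ne_zero _ hfb)
    obtain ⟨y, hy⟩ := IsIntegrallyClosed.isIntegral_iff.mp hint
    rw [Ideal.mem_span_singleton]
    exact ⟨y, finj (by rw [map_mul, hy, hf, mul_comm, hxb])⟩

lemma aux_main
    (R R' : Type*) [CommRing R] [CommRing R'] [Algebra R R']
    (hloc : ∀ (P' : Ideal R') (hp : P'.IsPrime),
      IsDomain (Localization (@Ideal.primeCompl R' _ P' hp)) ∧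
      IsIntegrallyClosed (Localization (@Ideal.primeCompl R' _ P' hp))) :
    ∀ a : R, IsIntegrallyClosedIdeal (Ideal.map (algebraMap R R') (Ideal.span {a})) := by
  intro a r hr
  set b : R' := algebraMap R R' a with hb
  have hmap : Ideal.map (algebraMap R R') (Ideal.span {a}) = Ideal.span {b} := by
    rw [Ideal.map_span, Set.image_singleton]
  rw [hmap] at hr ⊢
  apply Ideal.mem_of_localization_maximal
  intro P hP
  obtain ⟨hdom, hic⟩ := hloc P hP.isPrime
  set g : R' →+* Localization.AtPrime P := algebraMap R' (Localization.AtPrime P) with hg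
  have hmap2 : Ideal.map g (Ideal.span {b}) = Ideal.span {g b} := by
    rw [Ideal.map_span, Set.image_singleton]
  rw [hmap2]
  apply principal_isIntegrallyClosedIdeal (g b) (g r)
  obtain ⟨n, hn, c, hc, heq⟩ := hr
  refine ⟨n, hn, fun i => g (c i), fun i hi => ?_, ?_⟩
  · have := hc i hi
    rw [Ideal.span_singleton_pow, Ideal.mem_span_singleton] at this ⊢
    simpa [map_pow] using map_dvd g this
  · have := congrArg g heq
    simpa [map_add, map_pow, map_sum, map_mul] using this

/-- If `R'` is an `R`-algebra all of whose localizations at primes are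
integrally closed domains, then the extension `aR'` of any principal ideal `aR` is
integrally closed. In particular, if `(A, n)` is a Noetherian local domain whose `n`-adic
completion `Â` is a normal domain, then `aÂ` is integrally closed for every `a ∈ A`. -/
theorem principal_extension_integrally_closed_of_locally_normal
    (R R' : Type*) [CommRing R] [CommRing R'] [Algebra R R']
    (hloc : ∀ (P' : Ideal R') (hp : P'.IsPrime),
      IsDomain (Localization (@Ideal.primeCompl R' _ P' hp)) ∧
      IsIntegrallyClosed (Localization (@Ideal.primeCompl R' _ P' hp))) :
    (∀ a : R, IsIntegrallyClosedIdeal (Ideal.map (algebraMap R R') (Ideal.span {a}))) ∧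
    (∀ (A : Type*) (_ : CommRing A) (_ : IsDomain A) (_ : IsNoetherianRing A)
        (_ : IsLocalRing A),
      IsDomain (AdicCompletion (IsLocalRing.maximalIdeal A) A) →
      IsIntegrallyClosed (AdicCompletion (IsLocalRing.maximalIdeal A) A) →
      ∀ a : A, IsIntegrallyClosedIdeal
        (Ideal.map (algebraMap A (AdicCompletion (IsLocalRing.maximalIdeal A) A))
          (Ideal.span {a}))) := by
  refine ⟨aux_main R R' hloc, ?_⟩
  intro A _ _ _ _ hd hic a
  haveI := hd
  haveI := hic
  set C := AdicCompletion (IsLocalRing.maximalIdeal A) A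
  have hlocC : ∀ (P' : Ideal C) (hp : P'.IsPrime),
      IsDomain (Localization (@Ideal.primeCompl C _ P' hp)) ∧
      IsIntegrallyClosed (Localization (@Ideal.primeCompl C _ P' hp)) := by
    intro P' hp
    have h0 : P'.primeCompl ≤ nonZeroDivisors C :=
      le_nonZeroDivisors_of_noZeroDivisors (by simp [Ideal.primeCompl])
    constructor
    · exact IsLocalization.isDomain_localization h0
    · exact isIntegrallyClosed_of_isLocalization (Localization P'.primeCompl) P'.primeCompl h0
  exact aux_main A C hlocC a
end
end

section
/- If R is an integrally closed integral domain, then for every ideal I of R and every element x ∈ R, the integral closure of the ideal xI equals x times the integral closure of I. -/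
noncomputable section

/-- The integral closure of an ideal `I`, as a set: all elements integral over `I`. -/
def idealIntegralClosure {R : Type*} [CommRing R] (I : Ideal R) : Set R :=
  {r : R | IsIntegralOverIdeal I r}

open Polynomial in
/-- In an integrally closed domain `R`, for every ideal `I` and every
`x ∈ R`, the integral closure of `xI` equals `x` times the integral closure of `I`. -/
theorem idealIntegralClosure_smul
    (R : Type*) [CommRing R] [IsDomain R] [IsIntegrallyClosed R]
    (I : Ideal R) (x : R) :
    idealIntegralClosure (Ideal.span {x} * I) = (x * ·) '' idealIntegralClosure I := by
  ext r
  simp only [idealIntegralClosure, Set.mem_setOf_eq, Set.mem_image]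
  constructor
  · rintro ⟨n, hn, a, ha, heq⟩
    by_cases hx : x = 0
    · subst hx
      have hr : r = 0 := by
        have hsum : ∑ i ∈ Finset.Icc 1 n, a i * r ^ (n - i) = 0 := by
          apply Finset.sum_eq_zero
          intro i hi
          have h1 : 1 ≤ i := (Finset.mem_Icc.mp hi).1
          have hai := ha i hi
          rw [Ideal.span_singleton_eq_bot.mpr rfl, Ideal.bot_mul, ← Ideal.zero_eq_bot,
            zero_pow (by omega : i ≠ 0), Ideal.zero_eq_bot, Ideal.mem_bot] at hai
          rw [hai, zero_mul]
        have : r ^ n = 0 := by rw [hsum, add_zero] at heq; exact heq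
        exact pow_eq_zero_iff hn.ne' |>.mp this
      refine ⟨0, ⟨1, one_pos, fun _ => 0, by simp, by simp⟩, by simp [hr]⟩
    · have hbex : ∀ i ∈ Finset.Icc 1 n, ∃ b ∈ I ^ i, x ^ i * b = a i := by
        intro i hi
        have hai := ha i hi
        rw [mul_pow, Ideal.span_singleton_pow, Ideal.mem_span_singleton_mul] at hai
        exact hai
      choose! b hbI hbx using hbex
      set K := FractionRing R
      set f : R →+* K := algebraMap R K with hf
      have hinj : Function.Injective f := IsFractionRing.injective R K
      have hxK : f x ≠ 0 := fun h => hx (hinj (by simpa using h))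
      set s : K := f r / f x with hs
      have hxs : f x * s = f r := by
        rw [hs, mul_div_cancel₀ _ hxK]
      have hK : s ^ n + ∑ i ∈ Finset.Icc 1 n, f (b i) * s ^ (n - i) = 0 := by
        have h1 : (f x) ^ n * (s ^ n + ∑ i ∈ Finset.Icc 1 n, f (b i) * s ^ (n - i)) = 0 := by
          rw [mul_add, Finset.mul_sum]
          have e1 : (f x) ^ n * s ^ n = f (r ^ n) := by rw [← mul_pow, hxs, map_pow]
          have e2 : ∀ i ∈ Finset.Icc 1 n,
              (f x) ^ n * (f (b i) * s ^ (n - i)) = f (a i * r ^ (n - i)) := by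
            intro i hi
            obtain ⟨hi1, hi2⟩ := Finset.mem_Icc.mp hi
            have hxn : (f x) ^ n = (f x) ^ i * (f x) ^ (n - i) := by
              rw [← pow_add, Nat.add_sub_cancel' hi2]
            rw [hxn]
            calc f x ^ i * f x ^ (n - i) * (f (b i) * s ^ (n - i))
                = (f x ^ i * f (b i)) * (f x * s) ^ (n - i) := by ring
              _ = f (a i) * f r ^ (n - i) := by
                  rw [hxs, ← map_pow, ← map_mul, hbx i (Finset.mem_Icc.mpr ⟨hi1, hi2⟩)]
              _ = f (a i * r ^ (n - i)) := by rw [map_mul, map_pow]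
          rw [e1, Finset.sum_congr rfl e2, ← map_sum, ← map_add, heq, map_zero]
        rcases mul_eq_zero.mp h1 with h | h
        · exact absurd h (pow_ne_zero _ hxK)
        · exact h
      have hint : IsIntegral R s := by
        refine ⟨X ^ n + ∑ i ∈ Finset.Icc 1 n, C (b i) * X ^ (n - i), ?_, ?_⟩
        · obtain ⟨m, rfl⟩ : ∃ m, n = m + 1 := ⟨n - 1, by omega⟩
          apply Polynomial.monic_X_pow_add
          refine lt_of_le_of_lt (Polynomial.degree_sum_le _ _) ?_
          rw [Finset.sup_lt_iff (by exact WithBot.bot_lt_coe _)]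
          intro i hi
          obtain ⟨hi1, hi2⟩ := Finset.mem_Icc.mp hi
          refine lt_of_le_of_lt (Polynomial.degree_C_mul_X_pow_le _ _) ?_
          have hlt : m + 1 - i < m + 1 := by omega
          exact_mod_cast Nat.cast_lt.mpr hlt
        · rw [← Polynomial.aeval_def]
          simp only [map_add, map_pow, map_sum, map_mul, aeval_X, aeval_C]
          exact hK
      obtain ⟨s₀, hs₀⟩ := IsIntegrallyClosed.isIntegral_iff.mp hint
      have hr : r = x * s₀ := by
        apply hinj
        rw [map_mul, hs₀, hxs]
      refine ⟨s₀, ⟨n, hn, b, hbI, ?_⟩, hr.symm⟩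
      apply hinj
      rw [map_add, map_pow, map_sum, map_zero]
      simp only [map_mul, map_pow]
      rw [hs₀]
      exact hK
  · rintro ⟨s₀, ⟨n, hn, a, ha, heq⟩, rfl⟩
    refine ⟨n, hn, fun i => x ^ i * a i, ?_, ?_⟩
    · intro i hi
      rw [mul_pow, Ideal.span_singleton_pow, Ideal.mem_span_singleton_mul]
      exact ⟨a i, ha i hi, rfl⟩
    · have e : ∀ i ∈ Finset.Icc 1 n,
          x ^ i * a i * (x * s₀) ^ (n - i) = x ^ n * (a i * s₀ ^ (n - i)) := by
        intro i hi
        obtain ⟨hi1, hi2⟩ := Finset.mem_Icc.mp hi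
        rw [mul_pow]
        have : x ^ n = x ^ i * x ^ (n - i) := by rw [← pow_add, Nat.add_sub_cancel' hi2]
        rw [this]; ring
      rw [Finset.sum_congr rfl e, ← Finset.mul_sum, mul_pow, ← mul_add, heq, mul_zero]
end
end

section
/- The Rees algebra k[[x,y,z]][ft, gt], i.e., the subring of the polynomial ring k[[x,y,z]][t] generated over k[[x,y,z]] by ft and gt, is not integrally closed in its field of fractions: the element ξt, where ξ = (y−α)(z−β), is integral over k[[x,y,z]][ft,gt] (since (ξt)² = (ft)(gt)) but does not belong to k[[x,y,z]][ft,gt]. -/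
/-! The Rees algebra `R[ft, gt]` sits inside Mathlib's `reesAlgebra I = ⊕ Iⁿtⁿ` for `I = (f, g)`,
so the `t`-coefficient of each of its elements lies in `I`. But `ξ ∉ I`: setting `x = 0` turns
`ξ, f, g` into `yz, y², z²`, and comparing the coefficients of `y` in `yz ∈ (y², z²)` would give
`z ∈ (z²)`. On the other hand `ξt · (y - α) = ft · (z - β)` and `(ξt)² = (ft)(gt)`, so
`(y - α)² ∣ (ft · (z - β))²` in `R[ft, gt]`; in an integrally closed domain this would give
`(y - α) ∣ ft · (z - β)`, i.e. `ξt ∈ R[ft, gt]`. -/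

noncomputable section

variable (k : Type) [Field k]

open Polynomial in
/-- The Rees algebra `k[[x,y,z]][ft, gt]`, the subring of `k[[x,y,z]][t]` generated by
`k[[x,y,z]]` together with `ft` and `gt`. -/
def Rees (α β : PowerSeries k) : Subring (Polynomial (T3 k)) :=
  Subring.closure (Set.range (Polynomial.C : T3 k →+* Polynomial (T3 k)) ∪
    {Polynomial.C (fT k α) * Polynomial.X, Polynomial.C (gT k β) * Polynomial.X})

theorem Subring.not_isIntegrallyClosed_of_pow_mem_of_mul_mem {A : Type*} [CommRing A] [IsDomain A]
    {S : Subring A} {x d : A} (hd : d ∈ S) (hd0 : d ≠ 0) (hxd : x * d ∈ S) {n : ℕ} (hn : n ≠ 0)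
    (hxn : x ^ n ∈ S) (hx : x ∉ S) : ¬ IsIntegrallyClosed S := by
  intro _
  have hdvd : (⟨d, hd⟩ : S) ^ n ∣ ⟨x * d, hxd⟩ ^ n :=
    ⟨⟨x ^ n, hxn⟩, Subtype.ext (by simp [mul_pow, mul_comm])⟩
  obtain ⟨r, hr⟩ := (IsIntegrallyClosed.pow_dvd_pow_iff hn).mp hdvd
  have hxr : x = r := mul_right_cancel₀ hd0 (by simpa [mul_comm] using congrArg Subtype.val hr)
  exact hx (hxr ▸ r.2)

theorem Subring.isIntegralElem_subtype_of_pow_mem {A : Type*} [CommRing A] {S : Subring A}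
    {x : A} {n : ℕ} (hn : 0 < n) (hxn : x ^ n ∈ S) : S.subtype.IsIntegralElem x :=
  IsIntegral.of_pow hn (isIntegral_algebraMap (x := (⟨x ^ n, hxn⟩ : S)))

namespace PowerSeries

theorem X_notMem_span_X_sq {A : Type*} [CommRing A] [Nontrivial A] :
    (X : PowerSeries A) ∉ Ideal.span {X ^ 2} := by
  rw [Ideal.mem_span_singleton, X_pow_dvd_iff]
  intro h
  simpa using h 1 one_lt_two

theorem mem_span_singleton_of_X_mul_C_mem_span {A : Type*} [CommRing A] {a b : A}
    (h : X * C a ∈ Ideal.span {X ^ 2, C b}) : a ∈ Ideal.span {b} := by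
  obtain ⟨u, v, huv⟩ := Ideal.mem_span_pair.mp h
  have hcoeff := congrArg (coeff 1) huv
  rw [map_add, pow_two, ← mul_assoc, coeff_succ_mul_X, coeff_zero_mul_X, coeff_mul_C, coeff_mul_C,
    coeff_one_X, zero_add, one_mul] at hcoeff
  exact Ideal.mem_span_singleton'.mpr ⟨_, hcoeff⟩

theorem X_mul_C_X_notMem_span {A : Type*} [CommRing A] [Nontrivial A] :
    (X * C X : PowerSeries (PowerSeries A)) ∉ Ideal.span {X ^ 2, C X ^ 2} := by
  rw [← map_pow]
  exact fun h ↦ X_notMem_span_X_sq (mem_span_singleton_of_X_mul_C_mem_span h)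

end PowerSeries

theorem constantCoeff_embT_s18 (α : PowerSeries k) :
    PowerSeries.constantCoeff (embT k α) =
      PowerSeries.C (PowerSeries.C (PowerSeries.constantCoeff α)) := by
  rw [embT, ← PowerSeries.coeff_zero_eq_constantCoeff_apply, PowerSeries.coeff_map,
    PowerSeries.coeff_zero_eq_constantCoeff_apply]
  rfl

theorem constantCoeff_yT_sub_embT {α : PowerSeries k} (hα : PowerSeries.constantCoeff α = 0) :
    PowerSeries.constantCoeff (yT k - embT k α) = PowerSeries.X := by
  simp [yT, constantCoeff_embT_s18, hα]

theorem constantCoeff_zT_sub_embT {β : PowerSeries k} (hβ : PowerSeries.constantCoeff β = 0) :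
    PowerSeries.constantCoeff (zT k - embT k β) = PowerSeries.C PowerSeries.X := by
  simp [zT, constantCoeff_embT_s18, hβ]

theorem yT_sub_embT_ne_zero {α : PowerSeries k} (hα : PowerSeries.constantCoeff α = 0) :
    yT k - embT k α ≠ 0 := fun h ↦
  PowerSeries.X_ne_zero (by rw [← constantCoeff_yT_sub_embT k hα, h, map_zero])

theorem mul_notMem_span_fT_gT {α β : PowerSeries k} (hα : PowerSeries.constantCoeff α = 0)
    (hβ : PowerSeries.constantCoeff β = 0) :
    (yT k - embT k α) * (zT k - embT k β) ∉ Ideal.span {fT k α, gT k β} := by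
  intro h
  have h₀ := Ideal.mem_map_of_mem PowerSeries.constantCoeff h
  rw [Ideal.map_span, Set.image_pair, map_mul, fT, gT, map_pow, map_pow,
    constantCoeff_yT_sub_embT k hα, constantCoeff_zT_sub_embT k hβ] at h₀
  exact PowerSeries.X_mul_C_X_notMem_span h₀

section Rees

open Polynomial

theorem rees_le_reesAlgebra (α β : PowerSeries k) :
    Rees k α β ≤ (reesAlgebra (Ideal.span {fT k α, gT k β})).toSubring := by
  refine Subring.closure_le.mpr ?_
  rintro p (⟨a, rfl⟩ | rfl | rfl)
  · exact (reesAlgebra _).algebraMap_mem a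
  all_goals
    rw [C_mul_X_eq_monomial]
    exact reesAlgebra.monomial_mem.mpr (by rw [pow_one]; exact Ideal.subset_span (by simp))

theorem coeff_one_mem_span_of_mem_rees {α β : PowerSeries k} {p : (T3 k)[X]}
    (hp : p ∈ Rees k α β) : p.coeff 1 ∈ Ideal.span {fT k α, gT k β} :=
  pow_one (Ideal.span {fT k α, gT k β}) ▸ rees_le_reesAlgebra k α β hp 1

theorem C_mem_rees (α β : PowerSeries k) (a : T3 k) : C a ∈ Rees k α β :=
  Subring.subset_closure (Or.inl ⟨a, rfl⟩)

theorem C_fT_mul_X_mem_rees (α β : PowerSeries k) : C (fT k α) * X ∈ Rees k α β :=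
  Subring.subset_closure (Or.inr (Or.inl rfl))

theorem C_gT_mul_X_mem_rees (α β : PowerSeries k) : C (gT k β) * X ∈ Rees k α β :=
  Subring.subset_closure (Or.inr (Or.inr rfl))

end Rees

open Polynomial in
/-- The Rees algebra `k[[x,y,z]][ft, gt]` is not integrally closed in its
field of fractions: `ξt` (where `ξ = (y-α)(z-β)`) satisfies `(ξt)² = (ft)(gt)`, so it is
integral over the Rees algebra, but it does not belong to it. -/
theorem rees_algebra_not_integrally_closed (α β : PowerSeries k)
    (hα : PowerSeries.constantCoeff (R := k) α = 0) (hβ : PowerSeries.constantCoeff (R := k) β = 0) :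
    (Polynomial.C ((yT k - embT k α) * (zT k - embT k β)) * Polynomial.X) ^ 2 =
      (Polynomial.C (fT k α) * Polynomial.X) * (Polynomial.C (gT k β) * Polynomial.X) ∧
    RingHom.IsIntegralElem (Rees k α β).subtype
      (Polynomial.C ((yT k - embT k α) * (zT k - embT k β)) * Polynomial.X) ∧
    Polynomial.C ((yT k - embT k α) * (zT k - embT k β)) * Polynomial.X ∉ Rees k α β ∧
    ¬ IsIntegrallyClosed (Rees k α β) := by
  have hsq : (C ((yT k - embT k α) * (zT k - embT k β)) * X) ^ 2 =
      C (fT k α) * X * (C (gT k β) * X) := by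
    simp only [fT, gT, map_mul, map_pow]
    ring
  have hsq_mem := hsq ▸ mul_mem (C_fT_mul_X_mem_rees k α β) (C_gT_mul_X_mem_rees k α β)
  have hnotMem : C ((yT k - embT k α) * (zT k - embT k β)) * X ∉ Rees k α β := fun h ↦
    mul_notMem_span_fT_gT k hα hβ (by simpa using coeff_one_mem_span_of_mem_rees k h)
  have hmul_mem : C ((yT k - embT k α) * (zT k - embT k β)) * X * C (yT k - embT k α) ∈
      Rees k α β := by
    convert mul_mem (C_fT_mul_X_mem_rees k α β) (C_mem_rees k α β (zT k - embT k β)) using 1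
    simp only [fT, map_mul, map_pow]
    ring
  refine ⟨hsq, Subring.isIntegralElem_subtype_of_pow_mem two_pos hsq_mem, hnotMem, ?_⟩
  exact Subring.not_isIntegrallyClosed_of_pow_mem_of_mul_mem (C_mem_rees k α β _)
    (C_ne_zero.mpr (yT_sub_embT_ne_zero k hα)) hmul_mem two_ne_zero hsq_mem hnotMem
end
end
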